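/- arXiv:2410.08095 — 6 statements merged into one kernel-verified Lean document; each statement's English description precedes it below -/
import Mathlib

section
/- Let Ψ, φ, φ' ∈ ℝ^d be descending probability vectors, and define the maximal transformation probability into a target x by q_I(x) = min over { l ∈ {1,…,d} : C_l(x) > 0 } of C_l(Ψ)/C_l(x). If φ ≺ φ', then q_I(φ) ≤ q_I(φ'); that is, for a fixed initial vector Ψ, the maximal coherence transformation probability is a Schur-convex function of the target's coherence vector. -/
open Finset

/-- Tail-sum coherence monotone `C_l(p) = ∑_{i=l}^d p_i`, for a vector with (1-based)
entries `p 1, …, p d`.  Note `Cm d p (d+1) = 0` automatically. -/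
noncomputable def Cm (d : ℕ) (p : ℕ → ℝ) (l : ℕ) : ℝ := ∑ i ∈ Finset.Icc l d, p i

/-- `p` is a descending probability vector on the (1-based) index range `{1, …, d}`. -/
structure DescProb (d : ℕ) (p : ℕ → ℝ) : Prop where
  nonneg : ∀ i, 1 ≤ i → i ≤ d → 0 ≤ p i
  anti : ∀ i j, 1 ≤ i → i ≤ j → j ≤ d → p j ≤ p i
  sum_one : ∑ i ∈ Finset.Icc 1 d, p i = 1

/-- `p ≺ q` : `p` is majorized by `q` (both regarded as descending vectors on `{1, …, d}`). -/
def MajorizedBy (d : ℕ) (p q : ℕ → ℝ) : Prop :=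
  (∀ k, 1 ≤ k → k ≤ d → ∑ i ∈ Finset.Icc 1 k, p i ≤ ∑ i ∈ Finset.Icc 1 k, q i) ∧
    ∑ i ∈ Finset.Icc 1 d, p i = ∑ i ∈ Finset.Icc 1 d, q i

/- Since `φ` and `φ'` have the same total, `φ ≺ φ'` makes every tail sum of `φ'` at most the
corresponding tail sum of `φ`. So each ratio `C_l(Ψ)/C_l(φ')` in the infimum defining `q_I(φ')`
dominates the ratio `C_l(Ψ)/C_l(φ)`, which takes part in the infimum defining `q_I(φ)`. -/

lemma Cm_nonneg {d : ℕ} {p : ℕ → ℝ} (hp : ∀ i, 1 ≤ i → i ≤ d → 0 ≤ p i) {l : ℕ}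
    (hl : 1 ≤ l) : 0 ≤ Cm d p l :=
  sum_nonneg fun i hi => hp i (hl.trans (mem_Icc.1 hi).1) (mem_Icc.1 hi).2

lemma sum_Icc_one_eq_add_Cm (d : ℕ) (p : ℕ → ℝ) {l : ℕ} (hl : 1 ≤ l) (hld : l ≤ d + 1) :
    ∑ i ∈ Icc 1 d, p i = ∑ i ∈ Icc 1 (l - 1), p i + Cm d p l := by
  have hdisj : Disjoint (Icc 1 (l - 1)) (Icc l d) :=
    disjoint_left.2 fun i hi hi' => by simp only [mem_Icc] at hi hi'; omega
  rw [Cm, ← sum_union hdisj]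
  congr 1
  ext i
  simp only [mem_union, mem_Icc]
  omega

lemma MajorizedBy.Cm_le {d : ℕ} {p q : ℕ → ℝ} (h : MajorizedBy d p q) {l : ℕ} (hl : 1 ≤ l)
    (hld : l ≤ d) : Cm d q l ≤ Cm d p l := by
  have hprefix : ∑ i ∈ Icc 1 (l - 1), p i ≤ ∑ i ∈ Icc 1 (l - 1), q i := by
    rcases Nat.eq_or_lt_of_le hl with rfl | hl'
    · simp
    · exact h.1 (l - 1) (by omega) (by omega)
  linarith [h.2, sum_Icc_one_eq_add_Cm d p hl (by omega),
    sum_Icc_one_eq_add_Cm d q hl (by omega)]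

theorem schur_convex_initial_general (d : ℕ) (hd : 1 ≤ d) (Ψ φ φ' : ℕ → ℝ)
    (hΨ : DescProb d Ψ) (hφ' : DescProb d φ')
    (hmaj : MajorizedBy d φ φ') :
    sInf {r : ℝ | ∃ l, 1 ≤ l ∧ l ≤ d ∧ 0 < Cm d φ l ∧ r = Cm d Ψ l / Cm d φ l} ≤
      sInf {r : ℝ | ∃ l, 1 ≤ l ∧ l ≤ d ∧ 0 < Cm d φ' l ∧ r = Cm d Ψ l / Cm d φ' l} := by
  have hCm_one : Cm d φ' 1 = 1 := hφ'.sum_one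
  refine le_csInf ⟨_, 1, le_rfl, hd, hCm_one ▸ one_pos, rfl⟩ ?_
  rintro _ ⟨l, hl, hld, hpos', rfl⟩
  have hle := hmaj.Cm_le hl hld
  have hbdd :
      BddBelow {r : ℝ | ∃ l, 1 ≤ l ∧ l ≤ d ∧ 0 < Cm d φ l ∧ r = Cm d Ψ l / Cm d φ l} := by
    refine ⟨0, ?_⟩
    rintro _ ⟨k, hk, -, hpos, rfl⟩
    exact div_nonneg (Cm_nonneg hΨ.nonneg hk) hpos.le
  calc sInf _ ≤ Cm d Ψ l / Cm d φ l :=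
        csInf_le hbdd ⟨l, hl, hld, hpos'.trans_le hle, rfl⟩
    _ ≤ Cm d Ψ l / Cm d φ' l :=
        div_le_div_of_nonneg_left (Cm_nonneg hΨ.nonneg hl) hpos' hle

/-- For a fixed initial descending probability vector `Ψ`, the maximal
coherence transformation probability `q_I(x) = min {C_l(Ψ)/C_l(x) : 1 ≤ l ≤ d, C_l(x) > 0}`
is Schur-convex in the target vector: if `φ ≺ φ'` then `q_I(φ) ≤ q_I(φ')`. -/
theorem schur_convex_initial (d : ℕ) (hd : 1 ≤ d) (Ψ φ φ' : ℕ → ℝ)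
    (hΨ : DescProb d Ψ) (hφ : DescProb d φ) (hφ' : DescProb d φ')
    (hmaj : MajorizedBy d φ φ') :
    sInf {r : ℝ | ∃ l, 1 ≤ l ∧ l ≤ d ∧ 0 < Cm d φ l ∧ r = Cm d Ψ l / Cm d φ l} ≤
      sInf {r : ℝ | ∃ l, 1 ≤ l ∧ l ≤ d ∧ 0 < Cm d φ' l ∧ r = Cm d Ψ l / Cm d φ' l} :=
  schur_convex_initial_general d hd Ψ φ φ' hΨ hφ' hmaj
end

section
/- Let a, r ∈ ℝ^d satisfy a_1 ≥ a_2 ≥ ⋯ ≥ a_d ≥ 0, r_1 ≥ r_2 ≥ ⋯ ≥ r_d ≥ 0, ∑_{i=1}^d a_i = 1 and ∑_{i=1}^d r_i a_i = 1. Then ∑_{i=1}^k a_i ≤ ∑_{i=1}^k r_i a_i for every k ∈ {1,…,d}; that is, a is majorized by the Hadamard product r ⊙ a (whose entries (r⊙a)_i = r_i a_i are nonnegative and nonincreasing). -/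
open Finset

/-!
Since `∑ rᵢ aᵢ = ∑ aᵢ`, the factors `r` average to `1` against the weights `a ≥ 0`. Split the
indices at `k`: factors in the head `{1, …, k}` are at least `c = r_k`, those in the tail at
most `c`. If `c ≥ 1`, multiplying by `r` increases the head sum termwise; if `c < 1`, it
decreases the tail sum termwise, and as the totals agree it again increases the head sum.
-/

theorem sum_le_sum_mul_of_sum_mul_eq {ι R : Type*} [CommRing R] [LinearOrder R]
    [IsStrictOrderedRing R] [DecidableEq ι] {s u : Finset ι} {w r : ι → R}
    (hsu : s ⊆ u) (c : R) (hw : ∀ i ∈ u, 0 ≤ w i) (hs : ∀ i ∈ s, c ≤ r i)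
    (hus : ∀ i ∈ u \ s, r i ≤ c) (h : ∑ i ∈ u, r i * w i = ∑ i ∈ u, w i) :
    ∑ i ∈ s, w i ≤ ∑ i ∈ s, r i * w i := by
  rcases le_or_gt 1 c with hc | hc
  · refine sum_le_sum fun i hi => ?_
    exact le_mul_of_one_le_left (hw i (hsu hi)) (hc.trans (hs i hi))
  · have htail : ∑ i ∈ u \ s, r i * w i ≤ ∑ i ∈ u \ s, w i := by
      refine sum_le_sum fun i hi => ?_
      exact mul_le_of_le_one_left (hw i (sdiff_subset hi)) ((hus i hi).trans hc.le)
    have hw_split := sum_sdiff hsu (f := w)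
    have hrw_split := sum_sdiff hsu (f := fun i => r i * w i)
    linarith

theorem sum_Icc_le_sum_Icc_mul {d k : ℕ} {a r : ℕ → ℝ}
    (ha : ∀ i, 1 ≤ i → i ≤ d → 0 ≤ a i) (hr : ∀ i j, 1 ≤ i → i ≤ j → j ≤ d → r j ≤ r i)
    (hra : ∑ i ∈ Icc 1 d, r i * a i = ∑ i ∈ Icc 1 d, a i) (hk : 1 ≤ k) (hkd : k ≤ d) :
    ∑ i ∈ Icc 1 k, a i ≤ ∑ i ∈ Icc 1 k, r i * a i := by
  refine sum_le_sum_mul_of_sum_mul_eq (Icc_subset_Icc_right hkd) (r k) ?_ ?_ ?_ hra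
  · intro i hi
    rw [mem_Icc] at hi
    exact ha i hi.1 hi.2
  · intro i hi
    rw [mem_Icc] at hi
    exact hr i k hi.1 hi.2 hkd
  · intro i hi
    simp only [mem_sdiff, mem_Icc, not_and, not_le] at hi
    exact hr k i hk (hi.2 hi.1.1).le hi.1.2

theorem DescProb.mul {d : ℕ} {a r : ℕ → ℝ} (ha : DescProb d a)
    (hr_nonneg : ∀ i, 1 ≤ i → i ≤ d → 0 ≤ r i)
    (hr_anti : ∀ i j, 1 ≤ i → i ≤ j → j ≤ d → r j ≤ r i)
    (hra : ∑ i ∈ Icc 1 d, r i * a i = 1) :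
    DescProb d (fun i => r i * a i) where
  nonneg i hi hid := mul_nonneg (hr_nonneg i hi hid) (ha.nonneg i hi hid)
  anti i j hi hij hjd :=
    mul_le_mul (hr_anti i j hi hij hjd) (ha.anti i j hi hij hjd)
      (ha.nonneg j (hi.trans hij) hjd) (hr_nonneg i hi (hij.trans hjd))
  sum_one := hra

/-- If `a` is a descending probability vector, `r` is nonnegative and
nonincreasing, and `∑ r_i a_i = 1`, then `a` is majorized by the Hadamard product
`r ⊙ a`, whose entries are nonnegative and nonincreasing (and sum to `1`). -/
theorem majorized_by_hadamard (d : ℕ) (a r : ℕ → ℝ)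
    (ha : DescProb d a)
    (hr_nonneg : ∀ i, 1 ≤ i → i ≤ d → 0 ≤ r i)
    (hr_anti : ∀ i j, 1 ≤ i → i ≤ j → j ≤ d → r j ≤ r i)
    (hra : ∑ i ∈ Finset.Icc 1 d, r i * a i = 1) :
    (∀ k, 1 ≤ k → k ≤ d →
        ∑ i ∈ Finset.Icc 1 k, a i ≤ ∑ i ∈ Finset.Icc 1 k, r i * a i) ∧
      MajorizedBy d a (fun i => r i * a i) ∧ DescProb d (fun i => r i * a i) := by
  have hsum : ∑ i ∈ Icc 1 d, a i = ∑ i ∈ Icc 1 d, r i * a i := by rw [ha.sum_one, hra]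
  have hprefix : ∀ k, 1 ≤ k → k ≤ d →
      ∑ i ∈ Icc 1 k, a i ≤ ∑ i ∈ Icc 1 k, r i * a i := fun k hk hkd =>
    sum_Icc_le_sum_Icc_mul ha.nonneg hr_anti hsum.symm hk hkd
  exact ⟨hprefix, ⟨hprefix, hsum⟩, ha.mul hr_nonneg hr_anti hra⟩
end

section
/- The intermediate vector φ^f produced by the recursive construction is a descending probability vector: φ^f_1 ≥ φ^f_2 ≥ ⋯ ≥ φ^f_d ≥ 0 and ∑_{i=1}^d φ^f_i = 1. -/
open Finset

/-- The ratio `(C_l(ψ) - C_prev(ψ)) / (C_l(φ) - C_prev(φ))` appearing in the recursive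
construction of the intermediate vector. -/
noncomputable def ratio (d : ℕ) (ψ φ : ℕ → ℝ) (prev l : ℕ) : ℝ :=
  (Cm d ψ l - Cm d ψ prev) / (Cm d φ l - Cm d φ prev)

/-- One step of the recursion: the minimal ratio over `l ∈ {1, …, prev - 1}`. -/
noncomputable def stepQ (d : ℕ) (ψ φ : ℕ → ℝ) (prev : ℕ) : ℝ :=
  sInf {x : ℝ | ∃ l, 1 ≤ l ∧ l ≤ prev - 1 ∧ x = ratio d ψ φ prev l}

/-- One step of the recursion: the smallest `l ∈ {1, …, prev - 1}` attaining the minimal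
ratio. -/
noncomputable def stepL (d : ℕ) (ψ φ : ℕ → ℝ) (prev : ℕ) : ℕ :=
  sInf {l : ℕ | 1 ≤ l ∧ l ≤ prev - 1 ∧ ratio d ψ φ prev l = stepQ d ψ φ prev}

/-- The sequence of indices `l_0 = d + 1 > l_1 > l_2 > ⋯` of the recursive construction. -/
noncomputable def Lseq (d : ℕ) (ψ φ : ℕ → ℝ) : ℕ → ℕ
  | 0 => d + 1
  | j + 1 => stepL d ψ φ (Lseq d ψ φ j)

/-- The sequence of ratios `q_1 < q_2 < ⋯` of the recursive construction (`Qseq d ψ φ j`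
is `q_j` for `j ≥ 1`; the value at `0` is irrelevant). -/
noncomputable def Qseq (d : ℕ) (ψ φ : ℕ → ℝ) : ℕ → ℝ
  | 0 => 1
  | j + 1 => stepQ d ψ φ (Lseq d ψ φ j)

/-- The terminating step `k` of the recursion: the first index `j` with `l_j = 1`. -/
noncomputable def kstop (d : ℕ) (ψ φ : ℕ → ℝ) : ℕ := sInf {j : ℕ | Lseq d ψ φ j = 1}

/-- The intermediate vector `φ^f`, with `φ^f_i = q_j φ_i` for `i ∈ {l_j, …, l_{j-1} - 1}`
(for `i ∈ {1, …, d}`, the smallest `j` with `l_j ≤ i` is precisely the `j` with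
`l_j ≤ i ≤ l_{j-1} - 1`). -/
noncomputable def phif (d : ℕ) (ψ φ : ℕ → ℝ) (i : ℕ) : ℝ :=
  Qseq d ψ φ (sInf {j : ℕ | Lseq d ψ φ j ≤ i}) * φ i

/-! The ratios increase along the recursion, `q_1 ≤ q_2 ≤ ⋯ ≤ q_k`. Indeed, for `l < l_j` the
ratio of `ψ`- to `φ`-mass on `{l, …, l_{j-1} - 1}` is a mediant of the ratios on
`{l, …, l_j - 1}` and on `{l_j, …, l_{j-1} - 1}`. The latter ratio is `q_j` and the mediant is
`≥ q_j` by minimality, so the former is `≥ q_j` too; taking `l = l_{j+1}` gives `q_{j+1} ≥ q_j`.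
As `φ^f = q_j φ` on the block `{l_j, …, l_{j-1} - 1}` and blocks further left carry larger `q_j`,
`φ^f` is descending. On each block `φ^f` carries exactly the `ψ`-mass
`C_{l_j}(ψ) - C_{l_{j-1}}(ψ)`, so its total mass telescopes to `C_1(ψ) = 1`. -/

lemma le_div_of_le_add_div_add {q a₁ a₂ b₁ b₂ : ℝ} (hb₁ : 0 < b₁) (hb₂ : 0 < b₂)
    (h₂ : a₂ = q * b₂) (h : q ≤ (a₁ + a₂) / (b₁ + b₂)) : q ≤ a₁ / b₁ := by
  rw [le_div_iff₀ (add_pos hb₁ hb₂)] at h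
  rw [le_div_iff₀ hb₁]
  linarith

section Coherence

variable {d : ℕ}

lemma Cm_sub_Cm (p : ℕ → ℝ) {a b : ℕ} (hab : a ≤ b) (hb : b ≤ d + 1) :
    Cm d p a - Cm d p b = ∑ i ∈ Ico a b, p i := by
  rw [Cm, Cm, ← Ico_add_one_right_eq_Icc, ← Ico_add_one_right_eq_Icc,
    ← sum_Ico_consecutive p hab hb, add_sub_cancel_right]

lemma Cm_sub_Cm_nonneg {p : ℕ → ℝ} (hp : ∀ i, 1 ≤ i → i ≤ d → 0 ≤ p i) {a b : ℕ}
    (ha : 1 ≤ a) (hab : a ≤ b) (hb : b ≤ d + 1) : 0 ≤ Cm d p a - Cm d p b := by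
  rw [Cm_sub_Cm p hab hb]
  exact sum_nonneg fun i hi => hp i (ha.trans (mem_Ico.1 hi).1) (by grind)

lemma Cm_sub_Cm_pos {p : ℕ → ℝ} (hp : ∀ i, 1 ≤ i → i ≤ d → 0 < p i) {a b : ℕ}
    (ha : 1 ≤ a) (hab : a < b) (hb : b ≤ d + 1) : 0 < Cm d p a - Cm d p b := by
  rw [Cm_sub_Cm p hab.le hb]
  exact sum_pos (fun i hi => hp i (ha.trans (mem_Ico.1 hi).1) (by grind))
    ⟨a, mem_Ico.2 ⟨le_rfl, hab⟩⟩

end Coherence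

section Recursion

variable {d : ℕ} {ψ φ : ℕ → ℝ}

lemma finite_setOf_ratio (prev : ℕ) :
    {x : ℝ | ∃ l, 1 ≤ l ∧ l ≤ prev - 1 ∧ x = ratio d ψ φ prev l}.Finite :=
  ((Set.finite_Icc 1 (prev - 1)).image (ratio d ψ φ prev)).subset
    fun _ ⟨l, hl, hlp, hx⟩ => ⟨l, ⟨hl, hlp⟩, hx.symm⟩

lemma stepQ_le_ratio {prev l : ℕ} (hl : 1 ≤ l) (hlp : l ≤ prev - 1) :
    stepQ d ψ φ prev ≤ ratio d ψ φ prev l := by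
  exact csInf_le (finite_setOf_ratio prev).bddBelow ⟨l, hl, hlp, rfl⟩

lemma exists_ratio_eq_stepQ {prev : ℕ} (hprev : 2 ≤ prev) :
    ∃ l, 1 ≤ l ∧ l ≤ prev - 1 ∧ ratio d ψ φ prev l = stepQ d ψ φ prev := by
  have hne : {x : ℝ | ∃ l, 1 ≤ l ∧ l ≤ prev - 1 ∧ x = ratio d ψ φ prev l}.Nonempty :=
    ⟨_, 1, le_rfl, by omega, rfl⟩
  obtain ⟨l, hl, hlp, hx⟩ := hne.csInf_mem (finite_setOf_ratio prev)
  exact ⟨l, hl, hlp, hx.symm⟩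

lemma stepL_spec {prev : ℕ} (hprev : 2 ≤ prev) :
    1 ≤ stepL d ψ φ prev ∧ ratio d ψ φ prev (stepL d ψ φ prev) = stepQ d ψ φ prev := by
  obtain ⟨hl, -, hratio⟩ := Nat.sInf_mem (exists_ratio_eq_stepQ (ψ := ψ) (φ := φ) hprev)
  exact ⟨hl, hratio⟩

-- For `prev ≤ 1` the candidate set is empty and `stepL` takes the junk value `sInf ∅ = 0`.
lemma stepL_le_pred (prev : ℕ) : stepL d ψ φ prev ≤ prev - 1 := by
  rcases Set.eq_empty_or_nonempty
    {l : ℕ | 1 ≤ l ∧ l ≤ prev - 1 ∧ ratio d ψ φ prev l = stepQ d ψ φ prev} with h | h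
  · simp [stepL, h]
  · exact (Nat.sInf_mem h).2.1

lemma Lseq_antitone : Antitone (Lseq d ψ φ) :=
  antitone_nat_of_succ_le fun j => (stepL_le_pred (Lseq d ψ φ j)).trans (Nat.sub_le _ _)

lemma Lseq_le_sub (j : ℕ) : Lseq d ψ φ j ≤ d + 1 - j := by
  induction j with
  | zero => rfl
  | succ j ih => exact (stepL_le_pred (Lseq d ψ φ j)).trans (by omega)

lemma exists_Lseq_eq_one : ∃ j, Lseq d ψ φ j = 1 := by
  have hne : {j | Lseq d ψ φ j ≤ 1}.Nonempty := ⟨d + 1, (Lseq_le_sub _).trans (by omega)⟩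
  refine ⟨sInf {j | Lseq d ψ φ j ≤ 1}, le_antisymm (Nat.sInf_mem hne) ?_⟩
  rcases h : sInf {j | Lseq d ψ φ j ≤ 1} with _ | m
  · exact Nat.le_add_left 1 d
  · have hm : ¬ Lseq d ψ φ m ≤ 1 :=
      Nat.notMem_of_lt_sInf (s := {j | Lseq d ψ φ j ≤ 1}) (by omega)
    exact (stepL_spec (by omega)).1

lemma Lseq_kstop : Lseq d ψ φ (kstop d ψ φ) = 1 :=
  Nat.sInf_mem exists_Lseq_eq_one

lemma two_le_Lseq_of_lt_kstop {j : ℕ} (hj : j < kstop d ψ φ) : 2 ≤ Lseq d ψ φ j := by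
  have h1 : 1 ≤ Lseq d ψ φ j := Lseq_kstop (ψ := ψ) (φ := φ) ▸ Lseq_antitone hj.le
  have hne : Lseq d ψ φ j ≠ 1 := Nat.notMem_of_lt_sInf (s := {j | Lseq d ψ φ j = 1}) hj
  omega

lemma one_le_Lseq_succ {j : ℕ} (hj : j < kstop d ψ φ) : 1 ≤ Lseq d ψ φ (j + 1) :=
  (stepL_spec (two_le_Lseq_of_lt_kstop hj)).1

lemma ratio_Lseq_succ {j : ℕ} (hj : j < kstop d ψ φ) :
    ratio d ψ φ (Lseq d ψ φ j) (Lseq d ψ φ (j + 1)) = Qseq d ψ φ (j + 1) :=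
  (stepL_spec (two_le_Lseq_of_lt_kstop hj)).2

lemma Lseq_succ_lt {j : ℕ} (hj : j < kstop d ψ φ) : Lseq d ψ φ (j + 1) < Lseq d ψ φ j :=
  (stepL_le_pred _).trans_lt (by have := two_le_Lseq_of_lt_kstop hj; omega)

end Recursion

/-- The index `j` of the block `{l_j, …, l_{j-1} - 1}` containing `i`. -/
noncomputable def blockIndex (d : ℕ) (ψ φ : ℕ → ℝ) (i : ℕ) : ℕ :=
  sInf {j : ℕ | Lseq d ψ φ j ≤ i}

section Blocks

variable {d : ℕ} {ψ φ : ℕ → ℝ}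

lemma phif_eq (i : ℕ) : phif d ψ φ i = Qseq d ψ φ (blockIndex d ψ φ i) * φ i := rfl

lemma Lseq_blockIndex_le {i : ℕ} (hi : 1 ≤ i) : Lseq d ψ φ (blockIndex d ψ φ i) ≤ i :=
  Nat.sInf_mem (s := {j | Lseq d ψ φ j ≤ i}) ⟨kstop d ψ φ, Lseq_kstop.trans_le hi⟩

lemma blockIndex_le_kstop {i : ℕ} (hi : 1 ≤ i) : blockIndex d ψ φ i ≤ kstop d ψ φ :=
  Nat.sInf_le (s := {j | Lseq d ψ φ j ≤ i}) (Lseq_kstop.trans_le hi)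

lemma one_le_blockIndex {i : ℕ} (h1 : 1 ≤ i) (hi : i ≤ d) : 1 ≤ blockIndex d ψ φ i := by
  refine Nat.one_le_iff_ne_zero.2 fun h => ?_
  have := Lseq_blockIndex_le (d := d) (ψ := ψ) (φ := φ) h1
  rw [h] at this
  change d + 1 ≤ i at this
  omega

lemma blockIndex_anti {i j : ℕ} (hi : 1 ≤ i) (hij : i ≤ j) :
    blockIndex d ψ φ j ≤ blockIndex d ψ φ i :=
  Nat.sInf_le ((Lseq_blockIndex_le hi).trans hij)

lemma blockIndex_eq {i j : ℕ} (h₁ : Lseq d ψ φ (j + 1) ≤ i) (h₂ : i < Lseq d ψ φ j) :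
    blockIndex d ψ φ i = j + 1 := by
  refine le_antisymm (Nat.sInf_le h₁) (Nat.lt_of_not_le fun h => h₂.not_ge ?_)
  exact (Lseq_antitone h).trans (Nat.sInf_mem (s := {j | Lseq d ψ φ j ≤ i}) ⟨j + 1, h₁⟩)

end Blocks

section Ratios

variable {d : ℕ} {ψ φ : ℕ → ℝ}

lemma Qseq_nonneg (hψ : ∀ i, 1 ≤ i → i ≤ d → 0 ≤ ψ i) (hφ : ∀ i, 1 ≤ i → i ≤ d → 0 < φ i)
    {j : ℕ} (h1 : 1 ≤ j) (hj : j ≤ kstop d ψ φ) : 0 ≤ Qseq d ψ φ j := by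
  obtain ⟨m, rfl⟩ : ∃ m, j = m + 1 := ⟨j - 1, by omega⟩
  have hL := (Lseq_antitone (Nat.zero_le m) : Lseq d ψ φ m ≤ d + 1)
  rw [← ratio_Lseq_succ hj]
  exact div_nonneg (Cm_sub_Cm_nonneg hψ (one_le_Lseq_succ hj) (Lseq_succ_lt hj).le hL)
    (Cm_sub_Cm_pos hφ (one_le_Lseq_succ hj) (Lseq_succ_lt hj) hL).le

lemma Qseq_succ_le_succ (hφ : ∀ i, 1 ≤ i → i ≤ d → 0 < φ i) {j : ℕ}
    (hj : j + 2 ≤ kstop d ψ φ) :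
    Qseq d ψ φ (j + 1) ≤ Qseq d ψ φ (j + 2) := by
  set L := Lseq d ψ φ j
  set L' := Lseq d ψ φ (j + 1)
  set l := Lseq d ψ φ (j + 2)
  have hL : L ≤ d + 1 := Lseq_antitone (Nat.zero_le j)
  have hL'L : L' < L := Lseq_succ_lt (by omega)
  have hlL' : l < L' := Lseq_succ_lt hj
  have hl : 1 ≤ l := one_le_Lseq_succ hj
  have hq : Cm d ψ L' - Cm d ψ L = Qseq d ψ φ (j + 1) * (Cm d φ L' - Cm d φ L) := by
    rw [← ratio_Lseq_succ (by omega), ratio,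
      div_mul_cancel₀ _ (Cm_sub_Cm_pos hφ (by omega) hL'L hL).ne']
  have hmediant : Qseq d ψ φ (j + 1) ≤ ratio d ψ φ L l := stepQ_le_ratio hl (by omega)
  rw [ratio, ← sub_add_sub_cancel (Cm d ψ l) (Cm d ψ L'),
    ← sub_add_sub_cancel (Cm d φ l) (Cm d φ L')] at hmediant
  rw [← ratio_Lseq_succ (by omega : j + 1 < kstop d ψ φ), ratio]
  exact le_div_of_le_add_div_add (Cm_sub_Cm_pos hφ hl hlL' (by omega))
    (Cm_sub_Cm_pos hφ (by omega) hL'L hL) hq hmediant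

lemma Qseq_mono (hφ : ∀ i, 1 ≤ i → i ≤ d → 0 < φ i) {a b : ℕ} (ha : 1 ≤ a)
    (hab : a ≤ b) (hb : b ≤ kstop d ψ φ) :
    Qseq d ψ φ a ≤ Qseq d ψ φ b := by
  induction b, hab using Nat.le_induction with
  | base => rfl
  | succ b hab ih =>
    obtain ⟨m, rfl⟩ : ∃ m, b = m + 1 := ⟨b - 1, by omega⟩
    exact (ih (by omega)).trans (Qseq_succ_le_succ hφ hb)

lemma sum_phif_Ico_Lseq (hφ : ∀ i, 1 ≤ i → i ≤ d → 0 < φ i) {j : ℕ}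
    (hj : j ≤ kstop d ψ φ) :
    ∑ i ∈ Ico (Lseq d ψ φ j) (d + 1), phif d ψ φ i = Cm d ψ (Lseq d ψ φ j) := by
  induction j with
  | zero => simp [Lseq, Cm]
  | succ j ih =>
    have hj' : j < kstop d ψ φ := hj
    have hL : Lseq d ψ φ j ≤ d + 1 := Lseq_antitone (Nat.zero_le j)
    have hL'L := Lseq_succ_lt hj'
    have hblock : ∀ i ∈ Ico (Lseq d ψ φ (j + 1)) (Lseq d ψ φ j),
        phif d ψ φ i = Qseq d ψ φ (j + 1) * φ i := fun i hi => by
      rw [phif_eq, blockIndex_eq (mem_Ico.1 hi).1 (mem_Ico.1 hi).2]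
    rw [← sum_Ico_consecutive _ hL'L.le hL, ih hj'.le, sum_congr rfl hblock, ← mul_sum,
      ← Cm_sub_Cm φ hL'L.le hL, ← ratio_Lseq_succ hj', ratio,
      div_mul_cancel₀ _ (Cm_sub_Cm_pos hφ (one_le_Lseq_succ hj') hL'L hL).ne']
    ring

lemma sum_Icc_phif (hφ : ∀ i, 1 ≤ i → i ≤ d → 0 < φ i) :
    ∑ i ∈ Icc 1 d, phif d ψ φ i = ∑ i ∈ Icc 1 d, ψ i := by
  have := sum_phif_Ico_Lseq hφ (le_refl (kstop d ψ φ))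
  rwa [Lseq_kstop, Ico_add_one_right_eq_Icc] at this

end Ratios

theorem phif_descProb_general (d : ℕ) (ψ φ : ℕ → ℝ)
    (hψ : DescProb d ψ) (hφ : DescProb d φ)
    (hφpos : ∀ i, 1 ≤ i → i ≤ d → 0 < φ i) :
    DescProb d (phif d ψ φ) := by
  have hQ_nonneg {i : ℕ} (h1 : 1 ≤ i) (hi : i ≤ d) :
      0 ≤ Qseq d ψ φ (blockIndex d ψ φ i) :=
    Qseq_nonneg hψ.nonneg hφpos (one_le_blockIndex h1 hi) (blockIndex_le_kstop h1)
  refine ⟨fun i h1 hi => ?_, fun i j h1 hij hj => ?_, (sum_Icc_phif hφpos).trans hψ.sum_one⟩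
  · exact mul_nonneg (hQ_nonneg h1 hi) (hφ.nonneg i h1 hi)
  · have hQ : Qseq d ψ φ (blockIndex d ψ φ j) ≤ Qseq d ψ φ (blockIndex d ψ φ i) :=
      Qseq_mono hφpos (one_le_blockIndex (h1.trans hij) hj) (blockIndex_anti h1 hij)
        (blockIndex_le_kstop h1)
    rw [phif_eq, phif_eq]
    exact mul_le_mul hQ (hφ.anti i j h1 hij hj) (hφ.nonneg j (h1.trans hij) hj)
      (hQ_nonneg h1 (hij.trans hj))

/-- The intermediate vector `φ^f` produced by the recursive construction
is a descending probability vector. -/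
theorem phif_descProb (d : ℕ) (hd : 1 ≤ d) (ψ φ : ℕ → ℝ)
    (hψ : DescProb d ψ) (hφ : DescProb d φ)
    (hψpos : ∀ i, 1 ≤ i → i ≤ d → 0 < ψ i) (hφpos : ∀ i, 1 ≤ i → i ≤ d → 0 < φ i) :
    DescProb d (phif d ψ φ) :=
  phif_descProb_general d ψ φ hψ hφ hφpos
end

section
/- Let u^1, …, u^m ∈ ℝ^d be descending probability vectors and let g = u^1 ∧ ⋯ ∧ u^m be their meet. Then g is itself a descending probability vector (g_1 ≥ g_2 ≥ ⋯ ≥ g_d ≥ 0 and ∑_i g_i = 1); g ≺ u^ι for every ι; and for every descending probability vector h with h ≺ u^ι for all ι, one has h ≺ g. Hence g is the greatest lower bound of {u^1,…,u^m} in the majorization order. -/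
/-!
Write `S_ι(k) = ∑_{j ≤ k} u^ι_j` for the prefix sums and `F(k) = min_ι S_ι(k)`, so that
`g_i = F(i) - F(i-1)` and the prefix sums of `g` are exactly `F`. Majorization compares
prefix sums, so `g ≺ u^ι` and `h ≺ g` for every common lower bound `h` are immediate.
That `g` is again descending is the concavity of `F`: each `S_ι` is concave because `u^ι`
is descending, and a pointwise minimum of concave sequences is concave, as one sees by
comparing with an index attaining the minimum at the middle point.
-/

open Finset

/-- The meet `u^1 ∧ ⋯ ∧ u^m` of a family of descending probability vectors in the
majorization lattice, defined componentwise via prefix sums (empty sums are `0`). -/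
noncomputable def meetFam (m : ℕ) (u : Fin m → ℕ → ℝ) (i : ℕ) : ℝ :=
  (⨅ ι, ∑ j ∈ Finset.Icc 1 i, u ι j) - ⨅ ι, ∑ j ∈ Finset.Icc 1 (i - 1), u ι j

noncomputable def prefixSum (p : ℕ → ℝ) (k : ℕ) : ℝ := ∑ j ∈ Icc 1 k, p j

noncomputable def prefixMin (m : ℕ) (u : Fin m → ℕ → ℝ) (k : ℕ) : ℝ :=
  ⨅ ι, prefixSum (u ι) k

theorem ciInf_sub_ciInf_le_of_forall_sub_le {ι : Type*} [Finite ι] [Nonempty ι]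
    {f g h : ι → ℝ} (hfgh : ∀ i, h i - g i ≤ g i - f i) :
    (⨅ i, h i) - ⨅ i, g i ≤ (⨅ i, g i) - ⨅ i, f i := by
  obtain ⟨i, hi⟩ := exists_eq_ciInf_of_finite (f := g)
  have hh : ⨅ i, h i ≤ h i := ciInf_le (Set.finite_range h).bddBelow i
  have hf : ⨅ i, f i ≤ f i := ciInf_le (Set.finite_range f).bddBelow i
  linarith [hfgh i]

theorem antitone_Icc_of_succ_le {α : Type*} [Preorder α] {p : ℕ → α} {a b : ℕ}
    (h : ∀ i, a ≤ i → i + 1 ≤ b → p (i + 1) ≤ p i) :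
    ∀ i j, a ≤ i → i ≤ j → j ≤ b → p j ≤ p i := by
  intro i j hai hij
  induction j, hij using Nat.le_induction with
  | base => exact fun _ => le_rfl
  | succ n hin ih => exact fun hnb => (h n (hai.trans hin) hnb).trans (ih (by omega))

theorem sum_Icc_one_sub_pred {G : Type*} [AddCommGroup G] (F : ℕ → G) (k : ℕ) :
    ∑ i ∈ Icc 1 k, (F i - F (i - 1)) = F k - F 0 := by
  induction k with
  | zero => simp
  | succ n ih =>
    rw [sum_Icc_succ_top (by omega), ih, Nat.add_sub_cancel]
    abel

theorem prefixSum_zero (p : ℕ → ℝ) : prefixSum p 0 = 0 := by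
  simp [prefixSum]

theorem prefixSum_succ (p : ℕ → ℝ) (n : ℕ) : prefixSum p (n + 1) = prefixSum p n + p (n + 1) :=
  sum_Icc_succ_top (by omega) p

theorem prefixSum_mono {d : ℕ} {p : ℕ → ℝ} (hp : ∀ i, 1 ≤ i → i ≤ d → 0 ≤ p i) {k l : ℕ}
    (hkl : k ≤ l) (hl : l ≤ d) : prefixSum p k ≤ prefixSum p l :=
  sum_le_sum_of_subset_of_nonneg (Icc_subset_Icc_right hkl) fun i hi _ =>
    hp i (mem_Icc.mp hi).1 ((mem_Icc.mp hi).2.trans hl)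

theorem prefixSum_succ_sub_le {p : ℕ → ℝ} {i : ℕ} (hi : 1 ≤ i) (hp : p (i + 1) ≤ p i) :
    prefixSum p (i + 1) - prefixSum p i ≤ prefixSum p i - prefixSum p (i - 1) := by
  have hpred := prefixSum_succ p (i - 1)
  rw [Nat.sub_add_cancel hi] at hpred
  linarith [prefixSum_succ p i]

theorem meetFam_eq_prefixMin_sub (m : ℕ) (u : Fin m → ℕ → ℝ) (i : ℕ) :
    meetFam m u i = prefixMin m u i - prefixMin m u (i - 1) :=
  rfl

theorem prefixMin_zero (m : ℕ) (u : Fin m → ℕ → ℝ) : prefixMin m u 0 = 0 := by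
  simp only [prefixMin, prefixSum_zero, Real.iInf_const_zero]

theorem sum_Icc_meetFam (m : ℕ) (u : Fin m → ℕ → ℝ) (k : ℕ) :
    ∑ i ∈ Icc 1 k, meetFam m u i = prefixMin m u k := by
  simp only [meetFam_eq_prefixMin_sub, sum_Icc_one_sub_pred, prefixMin_zero, sub_zero]

section PrefixMin

variable {d m : ℕ} {u : Fin m → ℕ → ℝ}

theorem prefixMin_le (ι : Fin m) (k : ℕ) :
    prefixMin m u k ≤ prefixSum (u ι) k :=
  ciInf_le (Set.finite_range _).bddBelow ι

theorem le_prefixMin (hm : 1 ≤ m) {x : ℝ} {k : ℕ} (hx : ∀ ι, x ≤ prefixSum (u ι) k) :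
    x ≤ prefixMin m u k :=
  have : Nonempty (Fin m) := ⟨⟨0, hm⟩⟩
  le_ciInf hx

theorem prefixMin_of_forall_eq (hm : 1 ≤ m) {k : ℕ} {s : ℝ} (hs : ∀ ι, prefixSum (u ι) k = s) :
    prefixMin m u k = s :=
  le_antisymm ((prefixMin_le ⟨0, hm⟩ k).trans_eq (hs _)) (le_prefixMin hm fun ι => (hs ι).ge)

theorem prefixMin_mono (hu : ∀ ι, ∀ i, 1 ≤ i → i ≤ d → 0 ≤ u ι i) (hm : 1 ≤ m) {k l : ℕ}
    (hkl : k ≤ l) (hl : l ≤ d) : prefixMin m u k ≤ prefixMin m u l :=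
  le_prefixMin hm fun ι => (prefixMin_le ι k).trans (prefixSum_mono (hu ι) hkl hl)

theorem meetFam_succ_le (hm : 1 ≤ m) {i : ℕ} (hi : 1 ≤ i) (hu : ∀ ι, u ι (i + 1) ≤ u ι i) :
    meetFam m u (i + 1) ≤ meetFam m u i := by
  have : Nonempty (Fin m) := ⟨⟨0, hm⟩⟩
  rw [meetFam_eq_prefixMin_sub, meetFam_eq_prefixMin_sub, Nat.add_sub_cancel]
  exact ciInf_sub_ciInf_le_of_forall_sub_le fun ι => prefixSum_succ_sub_le hi (hu ι)

theorem descProb_meetFam (hu : ∀ ι, DescProb d (u ι)) (hm : 1 ≤ m) :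
    DescProb d (meetFam m u) where
  nonneg i _ hid := by
    rw [meetFam_eq_prefixMin_sub, sub_nonneg]
    exact prefixMin_mono (fun ι => (hu ι).nonneg) hm (Nat.sub_le i 1) hid
  anti := antitone_Icc_of_succ_le fun i hi hid =>
    meetFam_succ_le hm hi fun ι => (hu ι).anti i (i + 1) hi i.le_succ hid
  sum_one := by
    rw [sum_Icc_meetFam]
    exact prefixMin_of_forall_eq hm fun ι => (hu ι).sum_one

theorem meetFam_majorizedBy (hm : 1 ≤ m) {s : ℝ} (hs : ∀ ι, prefixSum (u ι) d = s) (ι : Fin m) :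
    MajorizedBy d (meetFam m u) (u ι) :=
  ⟨fun k _ _ => (sum_Icc_meetFam m u k).trans_le (prefixMin_le ι k), by
    rw [sum_Icc_meetFam, prefixMin_of_forall_eq hm hs]
    exact (hs ι).symm⟩

theorem majorizedBy_meetFam (hm : 1 ≤ m) {s : ℝ} (hs : ∀ ι, prefixSum (u ι) d = s)
    {h : ℕ → ℝ} (hh : ∀ ι, MajorizedBy d h (u ι)) : MajorizedBy d h (meetFam m u) :=
  ⟨fun k hk hkd => (le_prefixMin hm fun ι => (hh ι).1 k hk hkd).trans_eq
      (sum_Icc_meetFam m u k).symm, by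
    rw [sum_Icc_meetFam, prefixMin_of_forall_eq hm hs, (hh ⟨0, hm⟩).2]
    exact hs _⟩

end PrefixMin

theorem meet_is_glb_general (d m : ℕ) (hm : 1 ≤ m) (u : Fin m → ℕ → ℝ)
    (hu : ∀ ι, DescProb d (u ι)) :
    DescProb d (meetFam m u) ∧ (∀ ι, MajorizedBy d (meetFam m u) (u ι)) ∧
      ∀ h : ℕ → ℝ, DescProb d h → (∀ ι, MajorizedBy d h (u ι)) →
        MajorizedBy d h (meetFam m u) := by
  have hs : ∀ ι, prefixSum (u ι) d = 1 := fun ι => (hu ι).sum_one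
  exact ⟨descProb_meetFam hu hm, meetFam_majorizedBy hm hs,
    fun _ _ hh => majorizedBy_meetFam hm hs hh⟩

/-- The meet `g = u^1 ∧ ⋯ ∧ u^m` of descending probability vectors is
itself a descending probability vector, `g ≺ u^ι` for every `ι`, and any descending
probability vector `h` with `h ≺ u^ι` for all `ι` satisfies `h ≺ g`; hence `g` is the
greatest lower bound of the family in the majorization order. -/
theorem meet_is_glb (d m : ℕ) (hd : 1 ≤ d) (hm : 1 ≤ m) (u : Fin m → ℕ → ℝ)
    (hu : ∀ ι, DescProb d (u ι)) :
    DescProb d (meetFam m u) ∧ (∀ ι, MajorizedBy d (meetFam m u) (u ι)) ∧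
      ∀ h : ℕ → ℝ, DescProb d h → (∀ ι, MajorizedBy d h (u ι)) →
        MajorizedBy d h (meetFam m u) :=
  meet_is_glb_general d m hm u hu
end

section
/- Meet is monotone in the majorization order: if ψ, v, φ ∈ ℝ^d are descending probability vectors with v ≺ φ, then ψ∧v ≺ ψ∧φ (majorization of the componentwise-defined meets). -/
open Finset

/-- The meet `p ∧ q` of two descending probability vectors in the majorization lattice,
defined componentwise via prefix sums (empty sums are `0`). -/
noncomputable def meet2 (p q : ℕ → ℝ) (i : ℕ) : ℝ :=
  min (∑ j ∈ Finset.Icc 1 i, p j) (∑ j ∈ Finset.Icc 1 i, q j) -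
    min (∑ j ∈ Finset.Icc 1 (i - 1), p j) (∑ j ∈ Finset.Icc 1 (i - 1), q j)

theorem sum_Icc_one_meet2 (p q : ℕ → ℝ) (k : ℕ) :
    ∑ i ∈ Icc 1 k, meet2 p q i = min (∑ j ∈ Icc 1 k, p j) (∑ j ∈ Icc 1 k, q j) := by
  induction k with
  | zero => simp
  | succ k ih =>
    rw [sum_Icc_succ_top (Nat.le_add_left 1 k), ih, meet2, Nat.add_sub_cancel, add_sub_cancel]

theorem meet_monotone_general (d : ℕ) (ψ v φ : ℕ → ℝ)
    (hvφ : MajorizedBy d v φ) :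
    MajorizedBy d (meet2 ψ v) (meet2 ψ φ) := by
  obtain ⟨hprefix, htotal⟩ := hvφ
  refine ⟨fun k hk hkd => ?_, ?_⟩
  · simp only [sum_Icc_one_meet2]
    exact min_le_min_left _ (hprefix k hk hkd)
  · simp only [sum_Icc_one_meet2, htotal]

/-- The meet is monotone in the majorization order: if `v ≺ φ` then
`ψ ∧ v ≺ ψ ∧ φ`. -/
theorem meet_monotone (d : ℕ) (hd : 1 ≤ d) (ψ v φ : ℕ → ℝ)
    (hψ : DescProb d ψ) (hv : DescProb d v) (hφ : DescProb d φ)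
    (hvφ : MajorizedBy d v φ) :
    MajorizedBy d (meet2 ψ v) (meet2 ψ φ) :=
  meet_monotone_general d ψ v φ hvφ
end

section
/- Let ψ, φ ∈ ℝ^d be descending probability vectors with all entries strictly positive such that ψ is not majorized by φ, and let φ^∧ = ψ∧φ. Apply the recursive construction to the pair (ψ, φ), producing ratios q_1,…,q_k and indices l_1,…,l_k, and apply the same recursive construction to the pair (ψ, φ^∧), producing ratios t_1,…,t_{k'} and indices l'_1,…,l'_{k'}. Then k' = k, and t_j = q_j and l'_j = l_j for every j ∈ {1,…,k}. -/
open Finset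

/-! Write `A = C(ψ)` and `B = C(φ)`. Since `∑ ψ = ∑ φ`, the tails of the meet are
`C(ψ ∧ φ) = max A B`, so the ratios of the two recursions agree at every `l` with
`A l ≤ B l`. Inductively every `l_j` other than `d + 1` and `1` satisfies `A l_j < B l_j`.
Then every `l ≥ 2` with `B l ≤ A l` loses both minimisations to an index where the two
ratios agree: to `l = 1` by a mediant inequality, and at the first step (`l_0 = d + 1`) to
an index with `A l < B l`, which exists because `ψ` is not majorized by `φ`. Hence the
minima and the smallest minimisers of the two recursions coincide step by step. -/

section ArgMin

variable {α β : Type*} [ConditionallyCompleteLinearOrder β] {f : α → β} {S T : Set α}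

theorem sInf_image_eq_and_argmin_eq_of_forall_exists_lt (hS : S.Finite) (hTS : T ⊆ S)
    (hdom : ∀ l ∈ S, l ∉ T → ∃ l' ∈ T, f l' < f l) :
    sInf (f '' S) = sInf (f '' T) ∧
      {l | l ∈ S ∧ f l = sInf (f '' S)} = {l | l ∈ T ∧ f l = sInf (f '' T)} := by
  rcases S.eq_empty_or_nonempty with rfl | hne
  · rw [Set.subset_empty_iff.1 hTS]
    exact ⟨rfl, rfl⟩
  obtain ⟨m, hmS, hmin⟩ := S.exists_min_image f hS hne
  have hmT : m ∈ T := by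
    by_contra hmT
    obtain ⟨l', hl'T, hlt⟩ := hdom m hmS hmT
    exact (hmin l' (hTS hl'T)).not_gt hlt
  have hinfS : sInf (f '' S) = f m :=
    IsLeast.csInf_eq ⟨⟨m, hmS, rfl⟩, Set.forall_mem_image.2 hmin⟩
  have hinfT : sInf (f '' T) = f m :=
    IsLeast.csInf_eq ⟨⟨m, hmT, rfl⟩, Set.forall_mem_image.2 fun l hl => hmin l (hTS hl)⟩
  refine ⟨hinfS.trans hinfT.symm, ?_⟩
  rw [hinfS, hinfT]
  ext l
  refine ⟨fun ⟨hlS, hfl⟩ => ⟨?_, hfl⟩, fun ⟨hlT, hfl⟩ => ⟨hTS hlT, hfl⟩⟩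
  by_contra hlT
  obtain ⟨l', hl'T, hlt⟩ := hdom l hlS hlT
  exact (hmin l' (hTS hl'T)).not_gt (hfl ▸ hlt)

end ArgMin

theorem one_sub_div_one_sub_lt_sub_div_sub {a b x y : ℝ} (hab : a < b) (hby : b < y)
    (hyx : y ≤ x) (hx : x < 1) : (1 - a) / (1 - b) < (x - a) / (y - b) := by
  rw [div_lt_div_iff₀ (by linarith) (by linarith)]
  nlinarith [mul_pos (sub_pos.2 hab) (sub_pos.2 (hyx.trans_lt hx))]

section Tails

variable {d : ℕ} {p : ℕ → ℝ}

theorem Cm_eq_zero_of_lt {n : ℕ} (h : d < n) : Cm d p n = 0 := by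
  rw [Cm, Finset.Icc_eq_empty_of_lt h, Finset.sum_empty]

theorem Cm_eq_sum_Ico_add {l n : ℕ} (hln : l ≤ n) (hn : n ≤ d + 1) :
    Cm d p l = ∑ i ∈ Finset.Ico l n, p i + Cm d p n := by
  simp only [Cm, ← Finset.Ico_add_one_right_eq_Icc]
  exact (Finset.sum_Ico_consecutive p hln hn).symm

theorem Cm_lt_Cm (hpos : ∀ i, 1 ≤ i → i ≤ d → 0 < p i) {l n : ℕ} (hl : 1 ≤ l) (hln : l < n)
    (hn : n ≤ d + 1) : Cm d p n < Cm d p l := by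
  rw [Cm_eq_sum_Ico_add hln.le hn, lt_add_iff_pos_left]
  exact Finset.sum_pos (fun i hi => hpos i (hl.trans (Finset.mem_Ico.1 hi).1)
    (by linarith [(Finset.mem_Ico.1 hi).2])) ⟨l, Finset.mem_Ico.2 ⟨le_rfl, hln⟩⟩

theorem Cm_succ_eq_sub_sum {l : ℕ} (hl : l ≤ d) :
    Cm d p (l + 1) = ∑ i ∈ Finset.Icc 1 d, p i - ∑ i ∈ Finset.Icc 1 l, p i := by
  rw [eq_sub_iff_add_eq', ← Finset.Ico_add_one_right_eq_Icc 1 l]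
  exact (Cm_eq_sum_Ico_add (by omega) (by omega)).symm

end Tails

theorem sum_Icc_meet2 (ψ φ : ℕ → ℝ) (m : ℕ) :
    ∑ i ∈ Finset.Icc 1 m, meet2 ψ φ i =
      min (∑ i ∈ Finset.Icc 1 m, ψ i) (∑ i ∈ Finset.Icc 1 m, φ i) := by
  induction m with
  | zero => simp
  | succ m ih =>
    rw [Finset.sum_Icc_succ_top (by omega), ih, meet2, Nat.add_sub_cancel]
    ring

theorem Cm_meet2 {d : ℕ} {ψ φ : ℕ → ℝ}
    (hsum : ∑ i ∈ Finset.Icc 1 d, ψ i = ∑ i ∈ Finset.Icc 1 d, φ i) {l : ℕ} (hl : 1 ≤ l) :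
    Cm d (meet2 ψ φ) l = max (Cm d ψ l) (Cm d φ l) := by
  rcases lt_or_ge d l with hdl | hld
  · simp only [Cm_eq_zero_of_lt hdl, max_self]
  obtain ⟨l, rfl⟩ : ∃ k, l = k + 1 := ⟨l - 1, by omega⟩
  rw [Cm_succ_eq_sub_sum (by omega), Cm_succ_eq_sub_sum (by omega),
    Cm_succ_eq_sub_sum (by omega), sum_Icc_meet2, sum_Icc_meet2, hsum, min_self,
    max_sub_sub_left]

theorem exists_Cm_lt_of_not_majorizedBy {d : ℕ} {ψ φ : ℕ → ℝ}
    (hsum : ∑ i ∈ Finset.Icc 1 d, ψ i = ∑ i ∈ Finset.Icc 1 d, φ i)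
    (hnm : ¬ MajorizedBy d ψ φ) : ∃ l, 1 ≤ l ∧ l ≤ d ∧ Cm d ψ l < Cm d φ l := by
  obtain ⟨k, hk1, hkd, hk⟩ : ∃ k, 1 ≤ k ∧ k ≤ d ∧
      ∑ i ∈ Finset.Icc 1 k, φ i < ∑ i ∈ Finset.Icc 1 k, ψ i := by
    by_contra! h
    exact hnm ⟨h, hsum⟩
  have hkd' : k < d := lt_of_le_of_ne hkd (by rintro rfl; exact hk.ne hsum.symm)
  refine ⟨k + 1, by omega, hkd', ?_⟩
  rw [Cm_succ_eq_sub_sum hkd, Cm_succ_eq_sub_sum hkd, hsum]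
  linarith

section Recursion

variable {d : ℕ} {ψ φ : ℕ → ℝ}

theorem stepQ_eq_sInf_image (n : ℕ) :
    stepQ d ψ φ n = sInf (ratio d ψ φ n '' Set.Icc 1 (n - 1)) := by
  rw [stepQ]
  congr 1
  ext x
  simp only [Set.mem_ofPred_eq, Set.mem_image, Set.mem_Icc, and_assoc, eq_comm]

theorem stepL_eq_sInf_argmin (n : ℕ) :
    stepL d ψ φ n = sInf {l | l ∈ Set.Icc 1 (n - 1) ∧
      ratio d ψ φ n l = sInf (ratio d ψ φ n '' Set.Icc 1 (n - 1))} := by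
  simp only [stepL, stepQ_eq_sInf_image, Set.mem_Icc, and_assoc]

theorem step_eq_of_forall_exists_lt {φ' : ℕ → ℝ} {n : ℕ} (T : Set ℕ)
    (hTS : T ⊆ Set.Icc 1 (n - 1)) (hfg : ∀ l ∈ T, ratio d ψ φ n l = ratio d ψ φ' n l)
    (hdom : ∀ l ∈ Set.Icc 1 (n - 1), l ∉ T →
      ∃ l' ∈ T, ratio d ψ φ n l' < ratio d ψ φ n l ∧ ratio d ψ φ n l' < ratio d ψ φ' n l) :
    stepQ d ψ φ' n = stepQ d ψ φ n ∧ stepL d ψ φ' n = stepL d ψ φ n ∧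
      (stepL d ψ φ n ∈ T ∨ stepL d ψ φ n = 0) := by
  rw [stepQ_eq_sInf_image, stepQ_eq_sInf_image, stepL_eq_sInf_argmin, stepL_eq_sInf_argmin]
  generalize ratio d ψ φ n = f at *
  generalize ratio d ψ φ' n = g at *
  obtain ⟨hfS, hfarg⟩ := sInf_image_eq_and_argmin_eq_of_forall_exists_lt (f := f)
    (Set.finite_Icc _ _) hTS fun l hS hT => (hdom l hS hT).imp fun _ h => ⟨h.1, h.2.1⟩
  obtain ⟨hgS, hgarg⟩ := sInf_image_eq_and_argmin_eq_of_forall_exists_lt (f := g)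
    (Set.finite_Icc _ _) hTS fun l hS hT => (hdom l hS hT).imp fun l' h => ⟨h.1, hfg l' h.1 ▸ h.2.2⟩
  have himg : f '' T = g '' T := Set.image_congr hfg
  have harg : {l | l ∈ T ∧ f l = sInf (f '' T)} = {l | l ∈ T ∧ g l = sInf (g '' T)} := by
    rw [← himg]
    exact Set.ext fun l => and_congr_right fun hl => by rw [hfg l hl]
  rw [hfarg, hgarg, harg, hfS, hgS, himg]
  refine ⟨rfl, rfl, ?_⟩
  rcases Set.eq_empty_or_nonempty {l | l ∈ T ∧ g l = sInf (g '' T)} with he | hne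
  · exact Or.inr (by rw [he, Nat.sInf_empty])
  · exact Or.inl (Nat.sInf_mem hne).1

theorem ratio_lt_ratio_at_top (hφpos : ∀ i, 1 ≤ i → i ≤ d → 0 < φ i)
    (hsum : ∑ i ∈ Finset.Icc 1 d, ψ i = ∑ i ∈ Finset.Icc 1 d, φ i) {l₀ l : ℕ} (hl₀ : 1 ≤ l₀)
    (hl₀d : l₀ ≤ d) (hlt₀ : Cm d ψ l₀ < Cm d φ l₀) (hl : 1 ≤ l) (hld : l ≤ d)
    (hle : Cm d φ l ≤ Cm d ψ l) :
    ratio d ψ φ (d + 1) l₀ < ratio d ψ φ (d + 1) l ∧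
      ratio d ψ φ (d + 1) l₀ < ratio d ψ (meet2 ψ φ) (d + 1) l := by
  have hBpos : ∀ m, 1 ≤ m → m ≤ d → 0 < Cm d φ m := fun m hm hmd => by
    have h := Cm_lt_Cm hφpos hm (by omega : m < d + 1) le_rfl
    rwa [Cm_eq_zero_of_lt (lt_add_one d)] at h
  simp only [ratio, Cm_eq_zero_of_lt (lt_add_one d), sub_zero]
  have hlt_one : Cm d ψ l₀ / Cm d φ l₀ < 1 := (div_lt_one (hBpos l₀ hl₀ hl₀d)).2 hlt₀
  refine ⟨hlt_one.trans_le ((one_le_div (hBpos l hl hld)).2 hle), ?_⟩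
  rwa [Cm_meet2 hsum hl, max_eq_left hle, div_self ((hBpos l hl hld).trans_le hle).ne']

theorem ratio_one_lt_ratio (hψ : DescProb d ψ) (hφ : DescProb d φ)
    (hψpos : ∀ i, 1 ≤ i → i ≤ d → 0 < ψ i) (hφpos : ∀ i, 1 ≤ i → i ≤ d → 0 < φ i) {n l : ℕ}
    (hn : Cm d ψ n < Cm d φ n) (hl : 2 ≤ l) (hln : l < n) (hle : Cm d φ l ≤ Cm d ψ l) :
    ratio d ψ φ n 1 < ratio d ψ φ n l ∧ ratio d ψ φ n 1 < ratio d ψ (meet2 ψ φ) n l := by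
  have hsum := hψ.sum_one.trans hφ.sum_one.symm
  have hnd : n ≤ d := by
    by_contra! h
    simp only [Cm_eq_zero_of_lt h, lt_self_iff_false] at hn
  have hψ1 : Cm d ψ 1 = 1 := hψ.sum_one
  have hφ1 : Cm d φ 1 = 1 := hφ.sum_one
  have hBl : Cm d φ n < Cm d φ l := Cm_lt_Cm hφpos (by omega) hln (by omega)
  have hAl : Cm d ψ l < 1 := hψ1 ▸ Cm_lt_Cm hψpos le_rfl (by omega) (by omega)
  have hr1 : ratio d ψ φ n 1 = (1 - Cm d ψ n) / (1 - Cm d φ n) := by rw [ratio, hψ1, hφ1]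
  rw [hr1, ratio, ratio, Cm_meet2 hsum (by omega : 1 ≤ l), Cm_meet2 hsum (by omega : 1 ≤ n),
    max_eq_left hle, max_eq_right hn.le]
  exact ⟨one_sub_div_one_sub_lt_sub_div_sub hn hBl hle hAl,
    one_sub_div_one_sub_lt_sub_div_sub hn (hBl.trans_le hle) le_rfl hAl⟩

/-- The invariant satisfied by the indices `l_j` of the recursion for `(ψ, φ)`. -/
def TailLtAt (d : ℕ) (ψ φ : ℕ → ℝ) (n : ℕ) : Prop :=
  n ≤ 1 ∨ n = d + 1 ∨ Cm d ψ n < Cm d φ n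

section NotMajorized

variable (hψ : DescProb d ψ) (hφ : DescProb d φ) (hψpos : ∀ i, 1 ≤ i → i ≤ d → 0 < ψ i)
  (hφpos : ∀ i, 1 ≤ i → i ≤ d → 0 < φ i) (hnm : ¬ MajorizedBy d ψ φ)
include hψ hφ hψpos hφpos hnm

theorem step_meet2_eq {n : ℕ} (hn : TailLtAt d ψ φ n) :
    stepQ d ψ (meet2 ψ φ) n = stepQ d ψ φ n ∧ stepL d ψ (meet2 ψ φ) n = stepL d ψ φ n ∧
      TailLtAt d ψ φ (stepL d ψ φ n) := by
  have hsum := hψ.sum_one.trans hφ.sum_one.symm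
  let T : Set ℕ := {l | l ∈ Set.Icc 1 (n - 1) ∧ (l = 1 ∨ Cm d ψ l < Cm d φ l)}
  have hfg : ∀ l ∈ T, ratio d ψ φ n l = ratio d ψ (meet2 ψ φ) n l := by
    rintro l ⟨⟨hl1, hln⟩, hl⟩
    have hle : Cm d ψ l ≤ Cm d φ l := by
      rcases hl with rfl | hlt
      exacts [hsum.le, hlt.le]
    have hnle : Cm d ψ n ≤ Cm d φ n := by
      rcases hn with hn | rfl | hlt
      exacts [by omega, by simp only [Cm_eq_zero_of_lt (lt_add_one d), le_rfl], hlt.le]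
    rw [ratio, ratio, Cm_meet2 hsum hl1, Cm_meet2 hsum (by omega), max_eq_right hle,
      max_eq_right hnle]
  have hdom : ∀ l ∈ Set.Icc 1 (n - 1), l ∉ T → ∃ l' ∈ T,
      ratio d ψ φ n l' < ratio d ψ φ n l ∧ ratio d ψ φ n l' < ratio d ψ (meet2 ψ φ) n l := by
    rintro l ⟨hl1, hln⟩ hlT
    obtain ⟨hl_ne, hle⟩ : l ≠ 1 ∧ Cm d φ l ≤ Cm d ψ l :=
      (not_or.1 fun h => hlT ⟨⟨hl1, hln⟩, h⟩).imp_right not_lt.1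
    rcases hn with hn | rfl | hn
    · omega
    · obtain ⟨l₀, hl₀, hl₀d, hlt₀⟩ := exists_Cm_lt_of_not_majorizedBy hsum hnm
      exact ⟨l₀, ⟨⟨hl₀, by omega⟩, Or.inr hlt₀⟩,
        ratio_lt_ratio_at_top hφpos hsum hl₀ hl₀d hlt₀ hl1 (by omega) hle⟩
    · exact ⟨1, ⟨⟨le_rfl, by omega⟩, Or.inl rfl⟩,
        ratio_one_lt_ratio hψ hφ hψpos hφpos hn (by omega) (by omega) hle⟩
  obtain ⟨hQ, hL, hmem⟩ := step_eq_of_forall_exists_lt T (fun l hl => hl.1) hfg hdom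
  refine ⟨hQ, hL, ?_⟩
  rcases hmem with ⟨-, h1 | hlt⟩ | h0
  exacts [Or.inl h1.le, Or.inr (Or.inr hlt), Or.inl (by omega)]

theorem Lseq_meet2_eq (j : ℕ) :
    Lseq d ψ (meet2 ψ φ) j = Lseq d ψ φ j ∧ TailLtAt d ψ φ (Lseq d ψ φ j) := by
  induction j with
  | zero => exact ⟨rfl, Or.inr (Or.inl rfl)⟩
  | succ j ih =>
    obtain ⟨-, hL, hinv⟩ := step_meet2_eq hψ hφ hψpos hφpos hnm ih.2
    exact ⟨by rw [Lseq, Lseq, ih.1, hL], hinv⟩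

theorem Qseq_meet2_eq (j : ℕ) : Qseq d ψ (meet2 ψ φ) j = Qseq d ψ φ j := by
  cases j with
  | zero => rfl
  | succ j =>
    obtain ⟨hL, hinv⟩ := Lseq_meet2_eq hψ hφ hψpos hφpos hnm j
    rw [Qseq, Qseq, hL]
    exact (step_meet2_eq hψ hφ hψpos hφpos hnm hinv).1

end NotMajorized

end Recursion

theorem thrifty_same_recursion_general (d : ℕ) (ψ φ : ℕ → ℝ)
    (hψ : DescProb d ψ) (hφ : DescProb d φ)
    (hψpos : ∀ i, 1 ≤ i → i ≤ d → 0 < ψ i) (hφpos : ∀ i, 1 ≤ i → i ≤ d → 0 < φ i)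
    (hnm : ¬ MajorizedBy d ψ φ) :
    kstop d ψ (meet2 ψ φ) = kstop d ψ φ ∧
      ∀ j, 1 ≤ j → j ≤ kstop d ψ φ →
        Qseq d ψ (meet2 ψ φ) j = Qseq d ψ φ j ∧
          Lseq d ψ (meet2 ψ φ) j = Lseq d ψ φ j := by
  have hL : ∀ j, Lseq d ψ (meet2 ψ φ) j = Lseq d ψ φ j := fun j =>
    (Lseq_meet2_eq hψ hφ hψpos hφpos hnm j).1
  exact ⟨by simp only [kstop, hL], fun j _ _ => ⟨Qseq_meet2_eq hψ hφ hψpos hφpos hnm j, hL j⟩⟩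

/-- If `ψ` is not majorized by `φ`, then the recursive construction for
the pair `(ψ, ψ ∧ φ)` coincides with the one for `(ψ, φ)`: the stopping indices agree,
and `t_j = q_j`, `l'_j = l_j` for every `j ∈ {1, …, k}`. -/
theorem thrifty_same_recursion (d : ℕ) (hd : 1 ≤ d) (ψ φ : ℕ → ℝ)
    (hψ : DescProb d ψ) (hφ : DescProb d φ)
    (hψpos : ∀ i, 1 ≤ i → i ≤ d → 0 < ψ i) (hφpos : ∀ i, 1 ≤ i → i ≤ d → 0 < φ i)
    (hnm : ¬ MajorizedBy d ψ φ) :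
    kstop d ψ (meet2 ψ φ) = kstop d ψ φ ∧
      ∀ j, 1 ≤ j → j ≤ kstop d ψ φ →
        Qseq d ψ (meet2 ψ φ) j = Qseq d ψ φ j ∧
          Lseq d ψ (meet2 ψ φ) j = Lseq d ψ φ j :=
  thrifty_same_recursion_general d ψ φ hψ hφ hψpos hφpos hnm
end
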